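/- Let p, q > 0 and β₁, β₂ > 0, and let μ be the pushforward of the Beta(p, q) probability measure on ℝ under the affine map x ↦ -β₁ + (β₁ + β₂)·x. Then μ((-∞, 0]) = (Γ(p+q)/(Γ(p)·Γ(q))) · ∫₀^(β₁/β₂) s^(p-1) · (1+s)^(-(p+q)) ds. -/

import Mathlib

/-!
The affine map sends `{Z ≤ 0}` back to `{X ≤ t}` with `t = β₁/(β₁+β₂)`, so the left side is the
Beta density integrated over `[0, t]`. The substitution `x = s/(1+s)`, with `dx = ds/(1+s)²` and
`1 - x = 1/(1+s)`, maps `(0, β₁/β₂]` onto `(0, t]` and turns `x^(p-1) (1-x)^(q-1) dx` into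
`s^(p-1) (1+s)^(-(p+q)) ds`.
-/

open MeasureTheory Real

/-- The Beta(p,q) probability measure on ℝ: the measure supported on `[0,1]` with density
`x ↦ Γ(p+q)/(Γ(p)Γ(q)) * x^(p-1) * (1-x)^(q-1)` with respect to Lebesgue measure. -/
noncomputable def betaMeasure (p q : ℝ) : Measure ℝ :=
  volume.withDensity (fun x => ENNReal.ofReal (Set.indicator (Set.Icc (0:ℝ) 1)
    (fun x => Real.Gamma (p + q) / (Real.Gamma p * Real.Gamma q)
      * x ^ (p - 1) * (1 - x) ^ (q - 1)) x))

lemma MeasureTheory.Measure.map_add_mul_apply_Iic (ν : Measure ℝ) {a : ℝ} (ha : 0 < a) (b c : ℝ) :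
    ν.map (fun x => b + a * x) (Set.Iic c) = ν (Set.Iic ((c - b) / a)) := by
  rw [Measure.map_apply (by fun_prop) measurableSet_Iic]
  congr 1
  ext x
  simp only [Set.mem_preimage, Set.mem_Iic, le_div_iff₀ ha]
  constructor <;> intro h <;> linarith

lemma Gamma_add_div_Gamma_mul_Gamma_pos {p q : ℝ} (hp : 0 < p) (hq : 0 < q) :
    0 < Gamma (p + q) / (Gamma p * Gamma q) := by
  have := Gamma_pos_of_pos hp
  have := Gamma_pos_of_pos hq
  have := Gamma_pos_of_pos (add_pos hp hq)
  positivity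

lemma intervalIntegrable_rpow_mul_one_sub_rpow {p : ℝ} (hp : 0 < p) (q : ℝ) {t : ℝ} (ht : t < 1) :
    IntervalIntegrable (fun x => x ^ (p - 1) * (1 - x) ^ (q - 1)) volume 0 t := by
  refine (intervalIntegral.intervalIntegrable_rpow' (by linarith)).mul_continuousOn ?_
  refine ContinuousOn.rpow_const (by fun_prop) fun x hx => Or.inl ?_
  linarith [hx.2.trans_lt (sup_lt_iff.2 ⟨one_pos, ht⟩)]

lemma betaMeasure_Iic {p q t : ℝ} (hp : 0 < p) (hq : 0 < q) (ht₀ : 0 ≤ t) (ht₁ : t < 1) :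
    betaMeasure p q (Set.Iic t) = ENNReal.ofReal (Gamma (p + q) / (Gamma p * Gamma q)
      * ∫ x in (0:ℝ)..t, x ^ (p - 1) * (1 - x) ^ (q - 1)) := by
  set C := Gamma (p + q) / (Gamma p * Gamma q)
  have hInter : Set.Icc (0:ℝ) 1 ∩ Set.Iic t = Set.Icc 0 t := by
    ext x
    simp only [Set.mem_inter_iff, Set.mem_Icc, Set.mem_Iic]
    exact ⟨fun h => ⟨h.1.1, h.2⟩, fun h => ⟨⟨h.1, h.2.trans ht₁.le⟩, h.2⟩⟩
  have hdensity_nonneg : ∀ x ∈ Set.Icc (0:ℝ) 1, 0 ≤ C * x ^ (p - 1) * (1 - x) ^ (q - 1) :=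
    fun x hx => by
      have := (Gamma_add_div_Gamma_mul_Gamma_pos hp hq).le
      have := rpow_nonneg hx.1 (p - 1)
      have := rpow_nonneg (sub_nonneg.2 hx.2) (q - 1)
      positivity
  rw [betaMeasure, withDensity_apply _ measurableSet_Iic, ← ofReal_integral_eq_lintegral_ofReal,
    integral_indicator measurableSet_Icc, Measure.restrict_restrict measurableSet_Icc, hInter,
    integral_Icc_eq_integral_Ioc, ← intervalIntegral.integral_of_le ht₀,
    ← intervalIntegral.integral_const_mul]
  · simp only [mul_assoc, C]
  · rw [integrable_indicator_iff measurableSet_Icc, IntegrableOn,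
      Measure.restrict_restrict measurableSet_Icc, hInter]
    refine IntegrableOn.congr_set_ae ?_ Ioc_ae_eq_Icc.symm
    simpa only [IntegrableOn, mul_assoc, C] using
      ((intervalIntegrable_rpow_mul_one_sub_rpow hp q ht₁).1).const_mul C
  · exact Filter.Eventually.of_forall fun x => Set.indicator_nonneg hdensity_nonneg x

lemma rpow_div_one_add_mul_rpow_one_sub {s : ℝ} (hs : 0 ≤ s) (p q : ℝ) :
    ((1 + s) ^ 2)⁻¹ * ((s / (1 + s)) ^ (p - 1) * (1 - s / (1 + s)) ^ (q - 1))
      = s ^ (p - 1) * (1 + s) ^ (-(p + q)) := by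
  have h : 0 < 1 + s := by linarith
  have hsub : 1 - s / (1 + s) = (1 + s)⁻¹ := by field_simp; ring
  have := (rpow_pos_of_pos h (p - 1)).ne'
  have := (rpow_pos_of_pos h (q - 1)).ne'
  rw [hsub, div_rpow hs h.le, inv_rpow h.le, rpow_neg h.le,
    show p + q = (p - 1) + (q - 1) + 2 by ring, rpow_add h, rpow_add h, rpow_two]
  field_simp

lemma image_div_one_add_Ioc {r : ℝ} (hr : 0 ≤ r) :
    (fun s : ℝ => s / (1 + s)) '' Set.Ioc 0 r = Set.Ioc 0 (r / (1 + r)) := by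
  ext y
  simp only [Set.mem_image, Set.mem_Ioc]
  constructor
  · rintro ⟨s, ⟨hs₀, hsr⟩, rfl⟩
    refine ⟨by positivity, ?_⟩
    rw [div_le_div_iff₀ (by positivity) (by positivity)]
    nlinarith
  · rintro ⟨hy₀, hyr⟩
    have hy₁ : y < 1 := hyr.trans_lt ((div_lt_one (by positivity)).2 (by linarith))
    have : 0 < 1 - y := by linarith
    refine ⟨y / (1 - y), ⟨by positivity, ?_⟩, by field_simp; ring⟩
    rw [le_div_iff₀ (by positivity)] at hyr
    rw [div_le_iff₀ this]
    nlinarith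

lemma strictMonoOn_div_one_add : StrictMonoOn (fun s : ℝ => s / (1 + s)) (Set.Ioi (-1)) := by
  intro a ha b hb hab
  simp only [Set.mem_Ioi] at ha hb
  rw [div_lt_div_iff₀ (by linarith) (by linarith)]
  nlinarith

lemma integral_rpow_mul_one_sub_rpow_eq {r : ℝ} (hr : 0 ≤ r) (p q : ℝ) :
    ∫ x in (0:ℝ)..r / (1 + r), x ^ (p - 1) * (1 - x) ^ (q - 1)
      = ∫ s in (0:ℝ)..r, s ^ (p - 1) * (1 + s) ^ (-(p + q)) := by
  have hderiv : ∀ s ∈ Set.Ioc (0:ℝ) r,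
      HasDerivWithinAt (fun s : ℝ => s / (1 + s)) ((1 + s) ^ 2)⁻¹ (Set.Ioc 0 r) s := by
    intro s hs
    have h : 1 + s ≠ 0 := by linarith [hs.1]
    refine (((hasDerivAt_id s).div ((hasDerivAt_id s).const_add 1) h).congr_deriv ?_)
      |>.hasDerivWithinAt
    simp only [id]
    field_simp
    ring
  have hinj : Set.InjOn (fun s : ℝ => s / (1 + s)) (Set.Ioc 0 r) :=
    strictMonoOn_div_one_add.injOn.mono fun s hs => by simp only [Set.mem_Ioi]; linarith [hs.1]
  rw [intervalIntegral.integral_of_le (by positivity), intervalIntegral.integral_of_le hr,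
    ← image_div_one_add_Ioc hr,
    integral_image_eq_integral_abs_deriv_smul measurableSet_Ioc hderiv hinj]
  refine setIntegral_congr_fun measurableSet_Ioc fun s hs => ?_
  rw [abs_of_pos (inv_pos.2 (pow_pos (by linarith [hs.1]) 2)), smul_eq_mul,
    rpow_div_one_add_mul_rpow_one_sub hs.1.le]

theorem stmt_4 (p q β₁ β₂ : ℝ) (hp : 0 < p) (hq : 0 < q) (hβ₁ : 0 < β₁) (hβ₂ : 0 < β₂)
    (μ : Measure ℝ) (hμ : μ = Measure.map (fun x => -β₁ + (β₁ + β₂) * x) (betaMeasure p q)) :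
    μ (Set.Iic 0) = ENNReal.ofReal (Real.Gamma (p + q) / (Real.Gamma p * Real.Gamma q)
      * ∫ s in (0:ℝ)..(β₁ / β₂), s ^ (p - 1) * (1 + s) ^ (-(p + q))) := by
  have hr : 0 ≤ β₁ / β₂ := by positivity
  have ht : (0 - -β₁) / (β₁ + β₂) = β₁ / β₂ / (1 + β₁ / β₂) := by field_simp; ring
  have ht₁ : β₁ / β₂ / (1 + β₁ / β₂) < 1 := (div_lt_one (by positivity)).2 (by linarith)
  rw [hμ, Measure.map_add_mul_apply_Iic _ (by positivity), ht,
    betaMeasure_Iic hp hq (by positivity) ht₁, integral_rpow_mul_one_sub_rpow_eq hr]
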